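/- Energy estimate implying global stability of the disordered state: let Ω = (0,L₁)×(0,L₂)×(0,L₃) with L₁,L₂,L₃ > 0, let γ₂ ∈ ℝ, γ₃ > 0, σ > 0 and λ < −γ₂²/(2γ₃). Then for every twice continuously differentiable function u on the closure of Ω that is not identically zero, ∫_Ω ( −|Δu|² + λ|∇u|² − 2γ₂ u|∇u|² − 3γ₃ u²|∇u|² − σu² ) dx < 0. -/

import Mathlib

open Real MeasureTheory Set

/-- The Laplacian `Δu` of a function of three real variables. -/
noncomputable def lap3 (u : ℝ → ℝ → ℝ → ℝ) (x y z : ℝ) : ℝ :=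
  deriv (deriv (fun t => u t y z)) x + deriv (deriv (fun t => u x t z)) y +
    deriv (deriv (fun t => u x y t)) z

/-- The squared gradient `|∇u|²` of a function of three real variables. -/
noncomputable def gradSq (u : ℝ → ℝ → ℝ → ℝ) (x y z : ℝ) : ℝ :=
  (deriv (fun t => u t y z) x) ^ 2 + (deriv (fun t => u x t z) y) ^ 2 +
    (deriv (fun t => u x y t) z) ^ 2

lemma line_derivs {U : ℝ × ℝ × ℝ → ℝ} {Ω : Set (ℝ × ℝ × ℝ)} (hΩ : IsOpen Ω)
    (hU : ContDiffOn ℝ 2 U Ω) {v : ℝ × ℝ × ℝ} {ι : ℝ → ℝ × ℝ × ℝ}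
    (hι : ∀ t, HasDerivAt ι v t) {x₀ : ℝ} (hx : ι x₀ ∈ Ω) :
    deriv (fun t => U (ι t)) x₀ = fderiv ℝ U (ι x₀) v ∧
    deriv (deriv (fun t => U (ι t))) x₀ = fderiv ℝ (fderiv ℝ U) (ι x₀) v v := by
  have hcont : Continuous ι := continuous_iff_continuousAt.2 fun t => (hι t).continuousAt
  have hCA : ∀ q ∈ Ω, ContDiffAt ℝ 2 U q := fun q hq => hU.contDiffAt (hΩ.mem_nhds hq)
  have hA : ∀ t, ι t ∈ Ω → HasDerivAt (fun s => U (ι s)) (fderiv ℝ U (ι t) v) t := by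
    intro t ht
    exact (((hCA _ ht).differentiableAt (by norm_num)).hasFDerivAt).comp_hasDerivAt t (hι t)
  refine ⟨(hA x₀ hx).deriv, ?_⟩
  have hO : IsOpen (ι ⁻¹' Ω) := hΩ.preimage hcont
  have hEq : deriv (fun t => U (ι t)) =ᶠ[nhds x₀] fun t => fderiv ℝ U (ι t) v := by
    filter_upwards [hO.mem_nhds hx] with t ht
    exact (hA t ht).deriv
  rw [hEq.deriv_eq]
  have hfd : DifferentiableAt ℝ (fderiv ℝ U) (ι x₀) :=
    ((hCA _ hx).fderiv_right (m := 1) (by norm_num)).differentiableAt (by norm_num)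
  have h2 : HasDerivAt (fun t => fderiv ℝ U (ι t)) (fderiv ℝ (fderiv ℝ U) (ι x₀) v) x₀ :=
    hfd.hasFDerivAt.comp_hasDerivAt x₀ (hι x₀)
  have h3 : HasDerivAt (fun t => fderiv ℝ U (ι t) v) (fderiv ℝ (fderiv ℝ U) (ι x₀) v v) x₀ := by
    have := h2.clm_apply (hasDerivAt_const x₀ v)
    simpa using this
  exact h3.deriv

/-- energy estimate implying global stability of the disordered state:
for `γ₃ > 0`, `σ > 0`, `λ < −γ₂²/(2γ₃)` and every `C²` function `u` on the closure
of `Ω` that is not identically zero,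
`∫_Ω (−|Δu|² + λ|∇u|² − 2γ₂u|∇u|² − 3γ₃u²|∇u|² − σu²) dx < 0`. -/
theorem stmt_17 (L₁ L₂ L₃ γ₂ γ₃ σ lam : ℝ)
    (hL₁ : 0 < L₁) (hL₂ : 0 < L₂) (hL₃ : 0 < L₃)
    (hγ₃ : 0 < γ₃) (hσ : 0 < σ) (hlam : lam < -γ₂ ^ 2 / (2 * γ₃))
    (u : ℝ → ℝ → ℝ → ℝ)
    (hu : ContDiffOn ℝ 2 (fun p : ℝ × ℝ × ℝ => u p.1 p.2.1 p.2.2)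
      (closure (Ioo 0 L₁ ×ˢ Ioo 0 L₂ ×ˢ Ioo 0 L₃)))
    (hne : ∃ p ∈ closure (Ioo 0 L₁ ×ˢ Ioo 0 L₂ ×ˢ Ioo 0 L₃), u p.1 p.2.1 p.2.2 ≠ 0) :
    (∫ p in (Ioo 0 L₁ ×ˢ Ioo 0 L₂ ×ˢ Ioo 0 L₃ : Set (ℝ × ℝ × ℝ)),
      (-(lap3 u p.1 p.2.1 p.2.2) ^ 2 + lam * gradSq u p.1 p.2.1 p.2.2
        - 2 * γ₂ * u p.1 p.2.1 p.2.2 * gradSq u p.1 p.2.1 p.2.2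
        - 3 * γ₃ * (u p.1 p.2.1 p.2.2) ^ 2 * gradSq u p.1 p.2.1 p.2.2
        - σ * (u p.1 p.2.1 p.2.2) ^ 2)) < 0 := by
  set Ω : Set (ℝ × ℝ × ℝ) := Ioo 0 L₁ ×ˢ Ioo 0 L₂ ×ˢ Ioo 0 L₃ with hΩdef
  set U : ℝ × ℝ × ℝ → ℝ := fun p => u p.1 p.2.1 p.2.2 with hUdef
  have hopen : IsOpen Ω := isOpen_Ioo.prod (isOpen_Ioo.prod isOpen_Ioo)
  have hsub : Ω ⊆ closure Ω := subset_closure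
  have hmeas : MeasurableSet Ω := hopen.measurableSet
  have hKeq : closure Ω = Icc 0 L₁ ×ˢ Icc 0 L₂ ×ˢ Icc 0 L₃ := by
    rw [hΩdef, closure_prod_eq, closure_prod_eq, closure_Ioo hL₁.ne, closure_Ioo hL₂.ne,
      closure_Ioo hL₃.ne]
  have hKc : IsCompact (closure Ω) := by
    rw [hKeq]; exact isCompact_Icc.prod (isCompact_Icc.prod isCompact_Icc)
  have hmid : ((L₁ / 2, L₂ / 2, L₃ / 2) : ℝ × ℝ × ℝ) ∈ Ω := by
    simp only [hΩdef, Set.mem_prod, Set.mem_Ioo]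
    refine ⟨⟨?_, ?_⟩, ⟨?_, ?_⟩, ?_, ?_⟩ <;> linarith
  have hud : UniqueDiffOn ℝ (closure Ω) := by
    apply uniqueDiffOn_convex
    · rw [hKeq]; exact (convex_Icc _ _).prod ((convex_Icc _ _).prod (convex_Icc _ _))
    · exact ⟨_, (hopen.subset_interior_iff.mpr hsub) hmid⟩
  have hUΩ : ContDiffOn ℝ 2 U Ω := hu.mono hsub
  have hUcont : ContinuousOn U (closure Ω) := hu.continuousOn
  set F₁ : (ℝ × ℝ × ℝ) → (ℝ × ℝ × ℝ) →L[ℝ] ℝ := fderivWithin ℝ U (closure Ω) with hF₁def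
  set F₂ := fderivWithin ℝ F₁ (closure Ω) with hF₂def
  have hF₁cont : ContinuousOn F₁ (closure Ω) := hu.continuousOn_fderivWithin hud (by norm_num)
  have hF₁cd : ContDiffOn ℝ 1 F₁ (closure Ω) := hu.fderivWithin hud (by norm_num)
  have hF₂cont : ContinuousOn F₂ (closure Ω) :=
    hF₁cd.continuousOn_fderivWithin hud (by norm_num)
  have hK_nhds : ∀ p ∈ Ω, closure Ω ∈ nhds p := fun p hp =>
    Filter.mem_of_superset (hopen.mem_nhds hp) hsub
  have hF₁eq : ∀ p ∈ Ω, F₁ p = fderiv ℝ U p := fun p hp =>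
    fderivWithin_of_mem_nhds (hK_nhds p hp)
  have hF₂eq : ∀ p ∈ Ω, F₂ p = fderiv ℝ (fderiv ℝ U) p := by
    intro p hp
    rw [hF₂def, fderivWithin_of_mem_nhds (hK_nhds p hp)]
    apply Filter.EventuallyEq.fderiv_eq
    filter_upwards [hopen.mem_nhds hp] with q hq
    exact hF₁eq q hq
  set e₁ : ℝ × ℝ × ℝ := (1, 0, 0) with he₁
  set e₂ : ℝ × ℝ × ℝ := (0, 1, 0) with he₂
  set e₃ : ℝ × ℝ × ℝ := (0, 0, 1) with he₃
  set S2 : (ℝ × ℝ × ℝ) → ℝ := fun p => F₂ p e₁ e₁ + F₂ p e₂ e₂ + F₂ p e₃ e₃ with hS2def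
  set S1 : (ℝ × ℝ × ℝ) → ℝ := fun p => (F₁ p e₁) ^ 2 + (F₁ p e₂) ^ 2 + (F₁ p e₃) ^ 2 with hS1def
  set G : (ℝ × ℝ × ℝ) → ℝ := fun p =>
    -(S2 p) ^ 2 + lam * S1 p - 2 * γ₂ * U p * S1 p - 3 * γ₃ * (U p) ^ 2 * S1 p
      - σ * (U p) ^ 2 with hGdef
  have hS2cont : ContinuousOn S2 (closure Ω) :=
    (((hF₂cont.clm_apply continuousOn_const).clm_apply continuousOn_const).add
      ((hF₂cont.clm_apply continuousOn_const).clm_apply continuousOn_const)).add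
      ((hF₂cont.clm_apply continuousOn_const).clm_apply continuousOn_const)
  have hS1cont : ContinuousOn S1 (closure Ω) :=
    (((hF₁cont.clm_apply continuousOn_const).pow 2).add
      ((hF₁cont.clm_apply continuousOn_const).pow 2)).add
      ((hF₁cont.clm_apply continuousOn_const).pow 2)
  have hGcont : ContinuousOn G (closure Ω) := by
    apply ContinuousOn.sub
    apply ContinuousOn.sub
    apply ContinuousOn.sub
    · exact ((hS2cont.pow 2).neg).add (continuousOn_const.mul hS1cont)
    · exact ((continuousOn_const.mul hUcont).mul hS1cont)
    · exact ((continuousOn_const.mul (hUcont.pow 2)).mul hS1cont)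
    · exact continuousOn_const.mul (hUcont.pow 2)
  have hGint : IntegrableOn G Ω := (hGcont.integrableOn_compact hKc).mono_set hsub
  -- pointwise equality of the integrand with G on Ω
  have hfeq : ∀ p ∈ Ω,
      (-(lap3 u p.1 p.2.1 p.2.2) ^ 2 + lam * gradSq u p.1 p.2.1 p.2.2
        - 2 * γ₂ * u p.1 p.2.1 p.2.2 * gradSq u p.1 p.2.1 p.2.2
        - 3 * γ₃ * (u p.1 p.2.1 p.2.2) ^ 2 * gradSq u p.1 p.2.1 p.2.2
        - σ * (u p.1 p.2.1 p.2.2) ^ 2) = G p := by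
    intro p hp
    have hιx : ∀ t : ℝ, HasDerivAt (fun t => ((t, p.2.1, p.2.2) : ℝ × ℝ × ℝ)) e₁ t := fun t =>
      (hasDerivAt_id t).prodMk ((hasDerivAt_const t p.2.1).prodMk (hasDerivAt_const t p.2.2))
    have hιy : ∀ t : ℝ, HasDerivAt (fun t => ((p.1, t, p.2.2) : ℝ × ℝ × ℝ)) e₂ t := fun t =>
      (hasDerivAt_const t p.1).prodMk ((hasDerivAt_id t).prodMk (hasDerivAt_const t p.2.2))
    have hιz : ∀ t : ℝ, HasDerivAt (fun t => ((p.1, p.2.1, t) : ℝ × ℝ × ℝ)) e₃ t := fun t =>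
      (hasDerivAt_const t p.1).prodMk ((hasDerivAt_const t p.2.1).prodMk (hasDerivAt_id t))
    have hpx : ((p.1, p.2.1, p.2.2) : ℝ × ℝ × ℝ) ∈ Ω := hp
    have hx := line_derivs hopen hUΩ hιx (x₀ := p.1) hpx
    have hy := line_derivs hopen hUΩ hιy (x₀ := p.2.1) hpx
    have hz := line_derivs hopen hUΩ hιz (x₀ := p.2.2) hpx
    have h1x : deriv (fun t => u t p.2.1 p.2.2) p.1 = fderiv ℝ U p e₁ := hx.1
    have h2x : deriv (deriv (fun t => u t p.2.1 p.2.2)) p.1 = fderiv ℝ (fderiv ℝ U) p e₁ e₁ := hx.2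
    have h1y : deriv (fun t => u p.1 t p.2.2) p.2.1 = fderiv ℝ U p e₂ := hy.1
    have h2y : deriv (deriv (fun t => u p.1 t p.2.2)) p.2.1 = fderiv ℝ (fderiv ℝ U) p e₂ e₂ := hy.2
    have h1z : deriv (fun t => u p.1 p.2.1 t) p.2.2 = fderiv ℝ U p e₃ := hz.1
    have h2z : deriv (deriv (fun t => u p.1 p.2.1 t)) p.2.2 = fderiv ℝ (fderiv ℝ U) p e₃ e₃ := hz.2
    simp only [lap3, gradSq, h1x, h2x, h1y, h2y, h1z, h2z, hGdef, hS1def, hS2def,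
      hF₁eq p hp, hF₂eq p hp]
    rfl
  have hGle : ∀ p ∈ Ω, G p ≤ -(σ * (U p) ^ 2) := by
    intro p hp
    have hb : 0 ≤ S1 p := by
      rw [hS1def]; positivity
    have hlam' : lam * (2 * γ₃) < -γ₂ ^ 2 := (lt_div_iff₀ (by linarith)).mp hlam
    have hc : lam - 2 * γ₂ * U p - 3 * γ₃ * (U p) ^ 2 ≤ 0 := by
      have hident : (lam - 2 * γ₂ * U p - 3 * γ₃ * (U p) ^ 2) * (6 * γ₃)
          = 3 * (lam * (2 * γ₃)) + (-(3 * (γ₂ + 2 * γ₃ * U p) ^ 2)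
            - 6 * (γ₃ * U p) ^ 2 + 3 * γ₂ ^ 2) := by ring
      have h2 : (lam - 2 * γ₂ * U p - 3 * γ₃ * (U p) ^ 2) * (6 * γ₃) < 0 := by
        rw [hident]
        have hs1 := sq_nonneg (γ₂ + 2 * γ₃ * U p)
        have hs2 := sq_nonneg (γ₃ * U p)
        linarith
      by_contra h
      push_neg at h
      have : 0 ≤ (lam - 2 * γ₂ * U p - 3 * γ₃ * (U p) ^ 2) * (6 * γ₃) :=
        mul_nonneg h.le (by linarith)
      linarith
    have hcb : (lam - 2 * γ₂ * U p - 3 * γ₃ * (U p) ^ 2) * S1 p ≤ 0 :=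
      mul_nonpos_of_nonpos_of_nonneg hc hb
    have ha : 0 ≤ (S2 p) ^ 2 := sq_nonneg _
    have hexp : G p = -(S2 p) ^ 2 + (lam - 2 * γ₂ * U p - 3 * γ₃ * (U p) ^ 2) * S1 p
        - σ * (U p) ^ 2 := by rw [hGdef]; ring
    rw [hexp]
    linarith
  have hgint : IntegrableOn (fun p => -(σ * (U p) ^ 2)) Ω :=
    (((continuousOn_const.mul (hUcont.pow 2)).neg).integrableOn_compact hKc).mono_set hsub
  have hmono : (∫ p in Ω, G p) ≤ ∫ p in Ω, -(σ * (U p) ^ 2) :=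
    setIntegral_mono_on hGint hgint hmeas hGle
  have hi2 : IntegrableOn (fun p => (U p) ^ 2) Ω :=
    ((hUcont.pow 2).integrableOn_compact hKc).mono_set hsub
  have hpos : 0 < ∫ p in Ω, (U p) ^ 2 := by
    rw [setIntegral_pos_iff_support_of_nonneg_ae
      (Filter.Eventually.of_forall fun p => sq_nonneg _) hi2]
    obtain ⟨q, hqK, hq0⟩ := hne
    have hcw : ContinuousWithinAt U (closure Ω) q := hUcont q hqK
    have h' : ∀ᶠ p in nhdsWithin q (closure Ω), U p ≠ 0 :=
      hcw.eventually (eventually_ne_nhds hq0)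
    obtain ⟨O, hOopen, hqO, hOsub⟩ := mem_nhdsWithin.1 h'
    have hne' : (O ∩ Ω).Nonempty := mem_closure_iff.1 hqK O hOopen hqO
    have hsubset : O ∩ Ω ⊆ Function.support (fun p => (U p) ^ 2) ∩ Ω := by
      rintro r ⟨hrO, hrΩ⟩
      exact ⟨pow_ne_zero 2 (hOsub ⟨hrO, hsub hrΩ⟩), hrΩ⟩
    exact lt_of_lt_of_le ((hOopen.inter hopen).measure_pos volume hne') (measure_mono hsubset)
  have hlast : (∫ p in Ω, -(σ * (U p) ^ 2)) < 0 := by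
    rw [integral_neg]
    rw [integral_const_mul]
    have : 0 < σ * ∫ p in Ω, (U p) ^ 2 := mul_pos hσ hpos
    linarith
  calc (∫ p in Ω,
      (-(lap3 u p.1 p.2.1 p.2.2) ^ 2 + lam * gradSq u p.1 p.2.1 p.2.2
        - 2 * γ₂ * u p.1 p.2.1 p.2.2 * gradSq u p.1 p.2.1 p.2.2
        - 3 * γ₃ * (u p.1 p.2.1 p.2.2) ^ 2 * gradSq u p.1 p.2.1 p.2.2
        - σ * (u p.1 p.2.1 p.2.2) ^ 2)) = ∫ p in Ω, G p :=
        setIntegral_congr_fun hmeas hfeq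
    _ ≤ ∫ p in Ω, -(σ * (U p) ^ 2) := hmono
    _ < 0 := hlast
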